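/- Let G be a finite 4-regular graph, let v be a vertex of G with neighbours v1, v2, v3, v4, and for i = 1, 2, 3 let Gi be the graph obtained from G by deleting v, adding two new vertices x and y, joining x to v1 and v_{i+1}, and joining y to the other two vertices among v1, v2, v3, v4. Then G contains two edge-disjoint Hamiltonian cycles if and only if at least one of G1, G2, G3 admits a perfectly balanced double tree decomposition, i.e., a partition of its edges into two spanning trees T1, T2 with d_{T1}(u) = d_{T2}(u) for every vertex u. -/

import Mathlib

/-- A multigraph without loops: edges `E` with an endpoint map into unordered
pairs of vertices, no edge being a loop. -/
structure Multigraph (V : Type*) (E : Type*) where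
  ends : E → Sym2 V
  loopless : ∀ e, ¬ (ends e).IsDiag

namespace Multigraph

variable {V E : Type*}

/-- `a` and `b` are joined by an edge belonging to the edge set `S`. -/
def Adj (G : Multigraph V E) (S : Set E) (a b : V) : Prop :=
  ∃ e ∈ S, G.ends e = s(a, b)

/-- Reachability in the spanning subgraph with edge set `S`. -/
def Reachable (G : Multigraph V E) (S : Set E) (a b : V) : Prop :=
  Relation.ReflTransGen (G.Adj S) a b

/-- The spanning subgraph with edge set `S` is connected. -/
def Connected (G : Multigraph V E) (S : Set E) : Prop :=
  ∀ a b : V, G.Reachable S a b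

/-- The spanning subgraph with edge set `S` is acyclic: every edge of `S`
is a bridge of `S`. -/
def Acyclic (G : Multigraph V E) (S : Set E) : Prop :=
  ∀ e ∈ S, ∀ a b : V, G.ends e = s(a, b) → ¬ G.Reachable (S \ {e}) a b

/-- `S` is the edge set of a spanning tree: connected and acyclic. -/
def IsSpanningTree (G : Multigraph V E) (S : Set E) : Prop :=
  G.Connected S ∧ G.Acyclic S

/-- The edges of `S` incident to `v`. -/
def incEdges (G : Multigraph V E) (S : Set E) (v : V) : Set E :=
  {e ∈ S | v ∈ G.ends e}

/-- The degree of `v` in the spanning subgraph with edge set `S`. -/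
noncomputable def deg (G : Multigraph V E) (S : Set E) (v : V) : ℕ :=
  (G.incEdges S v).ncard

/-- `T1, T2` form a double tree decomposition of `G`: they partition the
edges of `G` and are both spanning trees. -/
def IsDTD (G : Multigraph V E) (T1 T2 : Set E) : Prop :=
  T1 ∪ T2 = Set.univ ∧ Disjoint T1 T2 ∧ G.IsSpanningTree T1 ∧ G.IsSpanningTree T2

/-- `G` is a double tree: the edge-disjoint union of two spanning trees. -/
def IsDoubleTree (G : Multigraph V E) : Prop :=
  ∃ T1 T2, G.IsDTD T1 T2

/-- A decomposition into two spanning subgraphs is `c`-balanced if at each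
vertex the two degrees differ by at most `c`. -/
def Balanced (G : Multigraph V E) (c : ℕ) (S1 S2 : Set E) : Prop :=
  ∀ v : V, |(G.deg S1 v : ℤ) - (G.deg S2 v : ℤ)| ≤ (c : ℤ)

end Multigraph

namespace Multigraph

variable {V E : Type*}

/-- The edge set `C` is a Hamiltonian cycle: connected and 2-regular. -/
def IsHamCycle (G : Multigraph V E) (C : Set E) : Prop :=
  G.Connected C ∧ ∀ v : V, G.deg C v = 2

/-- `G` has a perfectly balanced double tree decomposition. -/
def HasPerfectlyBalancedDTD (G : Multigraph V E) : Prop :=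
  ∃ T1 T2 : Set E, G.IsDTD T1 T2 ∧ ∀ v : V, G.deg T1 v = G.deg T2 v

/-- The graph obtained from `G` by splitting a vertex `v` into `x := Sum.inl v`
and a new vertex `y := Sum.inr ()`: the edges `ea, eb` (originally joining `v`
to `wa, wb`) are redirected to join `y` to `wa, wb`; all other edges are kept.
In particular all remaining edges of `v` stay at `x`. -/
def splitVertex [DecidableEq E] (G : Multigraph V E) (ea eb : E) (wa wb : V) :
    Multigraph (V ⊕ Unit) E where
  ends e :=
    if e = ea then s(Sum.inr (), Sum.inl wa)
    else if e = eb then s(Sum.inr (), Sum.inl wb)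
    else Sym2.map Sum.inl (G.ends e)
  loopless e := by
    split_ifs with h1 h2
    · simp [Sym2.mk_isDiag_iff]
    · simp [Sym2.mk_isDiag_iff]
    · intro hd
      exact G.loopless e ((Sym2.isDiag_map Sum.inl_injective).mp hd)

end Multigraph

/-!
Two edge-disjoint Hamiltonian cycles `C₁, C₂` of the 4-regular graph `G` use all its edges, and
each uses two of the four edges at `v`; for one of the three splittings every cycle has exactly
one of its two edges at `v` moved to the new vertex `y`. The cycle then becomes a Hamiltonian
path from `x` to `y`: it is connected because `x` and `y` are its only vertices of odd degree,
and it is a spanning tree because it has one edge fewer than the split graph has vertices. Both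
trees have degree `1` at `x` and `y` and `2` elsewhere, so the decomposition is perfectly
balanced.

Conversely, in a perfectly balanced double tree decomposition of the split graph each tree has
half of every degree: `1` at `x` and `y` and `2` elsewhere. Identifying `x` with `y` turns each
tree into a connected 2-regular spanning subgraph of `G`, i.e. a Hamiltonian cycle.
-/

theorem Set.ncard_inter_pair_eq_one_of_ncard_inter_eq_two {α : Type*} {C : Set α}
    {e₁ e₂ e₃ e₄ : α} (h₁₂ : e₁ ≠ e₂) (h₁₃ : e₁ ≠ e₃) (h₁₄ : e₁ ≠ e₄) (h₂₃ : e₂ ≠ e₃)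
    (h₂₄ : e₂ ≠ e₄) (h₃₄ : e₃ ≠ e₄) (h : (C ∩ {e₁, e₂, e₃, e₄}).ncard = 2) :
    (C ∩ {e₃, e₄}).ncard = 1 ∨ (C ∩ {e₂, e₄}).ncard = 1 ∨ (C ∩ {e₂, e₃}).ncard = 1 := by
  by_cases h₁ : e₁ ∈ C <;> by_cases h₂ : e₂ ∈ C <;> by_cases h₃ : e₃ ∈ C <;>
    by_cases h₄ : e₄ ∈ C <;>
    simp_all [Set.inter_insert_of_mem, Set.inter_insert_of_notMem, Set.ncard_insert_of_notMem]

namespace Multigraph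

variable {V E : Type*} {G : Multigraph V E} {S T : Set E} {a b c : V} {e : E}

theorem Adj.symm (h : G.Adj S a b) : G.Adj S b a := by
  obtain ⟨e, he, hab⟩ := h
  exact ⟨e, he, hab.trans Sym2.eq_swap⟩

theorem Reachable.trans (hab : G.Reachable S a b) (hbc : G.Reachable S b c) :
    G.Reachable S a c :=
  Relation.ReflTransGen.trans hab hbc

theorem Reachable.symm (h : G.Reachable S a b) : G.Reachable S b a := by
  induction h with
  | refl => exact .refl
  | tail _ hcd ih => exact .head hcd.symm ih

theorem reachable_of_mem_ends (he : e ∈ S) (ha : a ∈ G.ends e) (hb : b ∈ G.ends e) :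
    G.Reachable S a b := by
  rcases eq_or_ne a b with rfl | hab
  · exact Relation.ReflTransGen.refl
  · exact .single ⟨e, he, (Sym2.mem_and_mem_iff hab).mp ⟨ha, hb⟩⟩

theorem Connected.diff_singleton (hc : G.Connected S) (he : G.ends e = s(a, b))
    (hab : G.Reachable (S \ {e}) a b) : G.Connected (S \ {e}) := by
  intro c d
  refine Relation.ReflTransGen.lift' id (fun c d ⟨f, hf, hcd⟩ => ?_) _ _ (hc c d)
  by_cases hfe : f = e
  · subst hfe
    rcases Sym2.eq_iff.mp (hcd.symm.trans he) with ⟨rfl, rfl⟩ | ⟨rfl, rfl⟩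
    exacts [hab, hab.symm]
  · exact .single ⟨f, ⟨hf, hfe⟩, hcd⟩

theorem incEdges_eq_inter : G.incEdges S a = S ∩ G.incEdges Set.univ a := by
  ext e
  simp [incEdges]

theorem deg_union [Finite E] (h : Disjoint S T) :
    G.deg (S ∪ T) a = G.deg S a + G.deg T a := by
  have hunion : G.incEdges (S ∪ T) a = G.incEdges S a ∪ G.incEdges T a := by
    ext e
    simp only [incEdges, Set.mem_union, Set.mem_ofPred_eq, or_and_right]
  rw [deg, hunion, Set.ncard_union_eq (h.mono (fun _ h => h.1) (fun _ h => h.1))]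
  rfl

theorem deg_add_deg_of_union_eq_univ [Finite E] (hST : S ∪ T = Set.univ)
    (h : Disjoint S T) : G.deg S a + G.deg T a = G.deg Set.univ a := by
  rw [← deg_union h, hST]

theorem IsDTD.symm (h : G.IsDTD S T) : G.IsDTD T S :=
  ⟨Set.union_comm S T ▸ h.1, h.2.1.symm, h.2.2.2, h.2.2.1⟩

theorem sum_deg [Fintype V] [Finite E] (G : Multigraph V E) (S : Set E) :
    ∑ a, G.deg S a = 2 * S.ncard := by
  classical
  have := Fintype.ofFinite E
  have hdeg : ∀ a, G.deg S a = (S.toFinset.bipartiteAbove (fun a e => a ∈ G.ends e) a).card := by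
    intro a
    rw [deg, ← Set.ncard_coe_finset]
    congr 1
    ext e
    simp [incEdges, Finset.bipartiteAbove]
  have htwo : ∀ e,
      ((Finset.univ : Finset V).bipartiteBelow (fun a e => a ∈ G.ends e) e).card = 2 := by
    intro e
    rw [← Sym2.card_toFinset_of_not_isDiag _ (G.loopless e)]
    congr 1
    ext a
    simp [Finset.bipartiteBelow]
  simp_rw [hdeg, Finset.sum_card_bipartiteAbove_eq_sum_card_bipartiteBelow, htwo,
    Finset.sum_const, smul_eq_mul, Set.ncard_eq_toFinset_card', mul_comm]

theorem reachable_of_odd_deg [Finite V] [Finite E] (hodd : Odd (G.deg S a))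
    (heven : ∀ c, c ≠ a → c ≠ b → Even (G.deg S c)) : G.Reachable S a b := by
  classical
  have := Fintype.ofFinite V
  by_contra hab
  -- the edges of the component of `a` carry the full degree there and nothing elsewhere
  set K := {e ∈ S | ∃ c ∈ G.ends e, G.Reachable S a c}
  have hdegK : ∀ c, G.deg K c = if G.Reachable S a c then G.deg S c else 0 := by
    intro c
    split_ifs with hc
    · rw [deg, deg]
      congr 1
      ext e
      exact ⟨fun he => ⟨he.1.1, he.2⟩, fun he => ⟨⟨he.1, c, he.2, hc⟩, he.2⟩⟩
    · rw [deg, Set.ncard_eq_zero]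
      ext e
      simp only [incEdges, Set.mem_ofPred_eq, Set.mem_empty_iff_false, iff_false, not_and]
      rintro ⟨he, d, hd, had⟩ hce
      exact hc (had.trans (reachable_of_mem_ends he hd hce))
  have hsum := G.sum_deg K
  simp_rw [hdegK] at hsum
  rw [← Finset.add_sum_erase _ _ (Finset.mem_univ a), if_pos .refl] at hsum
  have hrest : Even (∑ c ∈ Finset.univ.erase a, if G.Reachable S a c then G.deg S c else 0) := by
    refine Finset.even_sum _ fun c hc => ?_
    split_ifs with hac
    · exact heven c (Finset.ne_of_mem_erase hc) (by rintro rfl; exact hab hac)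
    · exact Even.zero
  have hodd_sum := hodd.add_even hrest
  rw [hsum] at hodd_sum
  exact Nat.not_odd_iff_even.mpr (even_two_mul _) hodd_sum

theorem Connected.card_le_ncard_add_one [Finite V] [Finite E] (hc : G.Connected S) :
    Nat.card V ≤ S.ncard + 1 := by
  rcases isEmpty_or_nonempty V with _ | ⟨⟨a⟩⟩
  · simp
  let H := SimpleGraph.fromEdgeSet (G.ends '' S)
  have hH : H.Connected := by
    refine (H.connected_iff_exists_forall_reachable).mpr ⟨a, fun b => ?_⟩
    rw [SimpleGraph.reachable_iff_reflTransGen]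
    refine Relation.ReflTransGen.mono (fun c d ⟨e, he, hcd⟩ => ?_) _ _ (hc a b)
    refine (SimpleGraph.fromEdgeSet_adj _).mpr ⟨⟨e, he, hcd⟩, ?_⟩
    rintro rfl
    exact G.loopless e (hcd ▸ Sym2.mk_isDiag_iff.mpr rfl)
  calc Nat.card V ≤ H.edgeSet.ncard + 1 := by
        rw [← Nat.card_coe_set_eq]; exact hH.card_vert_le_card_edgeSet_add_one
    _ ≤ (G.ends '' S).ncard + 1 := by
        gcongr
        · exact Set.toFinite _
        · rw [SimpleGraph.edgeSet_fromEdgeSet]; exact Set.sdiff_subset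
    _ ≤ S.ncard + 1 := by gcongr; exact Set.ncard_image_le (Set.toFinite S)

theorem isSpanningTree_of_connected_of_ncard_add_one [Finite V] [Finite E]
    (hc : G.Connected S) (hcard : S.ncard + 1 = Nat.card V) : G.IsSpanningTree S := by
  refine ⟨hc, fun e he a b hab hreach => ?_⟩
  have := (hc.diff_singleton hab hreach).card_le_ncard_add_one
  rw [Set.ncard_sdiff_singleton_of_mem he] at this
  have : S.ncard ≠ 0 := Set.ncard_ne_zero_of_mem he
  omega

theorem IsHamCycle.ncard [Finite V] [Finite E] (hS : G.IsHamCycle S) :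
    S.ncard = Nat.card V := by
  have := Fintype.ofFinite V
  have := G.sum_deg S
  simp only [hS.2, Finset.sum_const, Finset.card_univ, smul_eq_mul] at this
  rw [Nat.card_eq_fintype_card]
  omega

theorem IsHamCycle.union_eq_univ [Finite V] [Finite E] (hreg : ∀ a, G.deg Set.univ a = 4)
    (hS : G.IsHamCycle S) (hT : G.IsHamCycle T) (hST : Disjoint S T) :
    S ∪ T = Set.univ := by
  have := Fintype.ofFinite V
  have huniv := G.sum_deg Set.univ
  simp only [hreg, Finset.sum_const, Finset.card_univ, smul_eq_mul] at huniv
  refine Set.eq_of_subset_of_ncard_le (Set.subset_univ _) ?_ (Set.toFinite _)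
  rw [Set.ncard_union_eq hST, hS.ncard, hT.ncard, Nat.card_eq_fintype_card]
  omega

def unsplit (v : V) : V ⊕ Unit → V :=
  Sum.elim id fun _ => v

@[simp] theorem unsplit_inl (v w : V) : unsplit v (Sum.inl w) = w := rfl

@[simp] theorem unsplit_inr (v : V) : unsplit v (Sum.inr ()) = v := rfl

section Split

variable [DecidableEq E] {v w wa wb : V} {ea eb : E}

theorem map_unsplit_splitVertex_ends (hwa : G.ends ea = s(v, wa)) (hwb : G.ends eb = s(v, wb))
    (e : E) : ((G.splitVertex ea eb wa wb).ends e).map (unsplit v) = G.ends e := by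
  simp only [splitVertex]
  split_ifs with h₁ h₂
  · simp [h₁, hwa]
  · simp [h₂, hwb]
  · simp [Sym2.map_map, Function.comp_def]

theorem splitVertex_ends_of_ne (h₁ : e ≠ ea) (h₂ : e ≠ eb) :
    (G.splitVertex ea eb wa wb).ends e = (G.ends e).map Sum.inl := by
  simp [splitVertex, h₁, h₂]

theorem inr_mem_splitVertex_ends_iff :
    Sum.inr () ∈ (G.splitVertex ea eb wa wb).ends e ↔ e = ea ∨ e = eb := by
  simp only [splitVertex]
  split_ifs <;> simp [*]

theorem inl_mem_splitVertex_ends_iff (hwa : G.ends ea = s(v, wa))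
    (hwb : G.ends eb = s(v, wb)) (hw : w ≠ v) :
    Sum.inl w ∈ (G.splitVertex ea eb wa wb).ends e ↔ w ∈ G.ends e := by
  rw [← map_unsplit_splitVertex_ends hwa hwb e, Sym2.mem_map]
  refine ⟨fun h => ⟨_, h, rfl⟩, ?_⟩
  rintro ⟨w' | ⟨⟩, hz, hzw⟩
  · cases hzw
    exact hz
  · exact absurd hzw.symm hw

theorem mem_ends_iff_inl_or_inr_mem_splitVertex_ends (hwa : G.ends ea = s(v, wa))
    (hwb : G.ends eb = s(v, wb)) :
    v ∈ G.ends e ↔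
      Sum.inl v ∈ (G.splitVertex ea eb wa wb).ends e ∨
        Sum.inr () ∈ (G.splitVertex ea eb wa wb).ends e := by
  rw [← map_unsplit_splitVertex_ends hwa hwb e, Sym2.mem_map]
  constructor
  · rintro ⟨w' | ⟨⟩, hz, hzv⟩
    · rw [unsplit_inl] at hzv
      exact Or.inl (hzv ▸ hz)
    · exact Or.inr hz
  · rintro (h | h)
    exacts [⟨_, h, rfl⟩, ⟨_, h, rfl⟩]

theorem not_inl_and_inr_mem_splitVertex_ends (hwa : G.ends ea = s(v, wa))
    (hwb : G.ends eb = s(v, wb)) :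
    ¬ (Sum.inl v ∈ (G.splitVertex ea eb wa wb).ends e ∧
      Sum.inr () ∈ (G.splitVertex ea eb wa wb).ends e) := by
  rw [Sym2.mem_and_mem_iff Sum.inl_ne_inr]
  intro h
  apply G.loopless e
  rw [← map_unsplit_splitVertex_ends hwa hwb e, h]
  simp

theorem deg_splitVertex_inl (hwa : G.ends ea = s(v, wa)) (hwb : G.ends eb = s(v, wb))
    (hw : w ≠ v) (S : Set E) : (G.splitVertex ea eb wa wb).deg S (Sum.inl w) = G.deg S w := by
  simp only [deg, incEdges, inl_mem_splitVertex_ends_iff hwa hwb hw]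

theorem deg_splitVertex_inr (S : Set E) :
    (G.splitVertex ea eb wa wb).deg S (Sum.inr ()) = (S ∩ {ea, eb}).ncard := by
  simp only [deg, incEdges, inr_mem_splitVertex_ends_iff]
  rfl

theorem deg_splitVertex_inl_add_inr [Finite E] (hwa : G.ends ea = s(v, wa))
    (hwb : G.ends eb = s(v, wb)) (S : Set E) :
    (G.splitVertex ea eb wa wb).deg S (Sum.inl v) + (G.splitVertex ea eb wa wb).deg S (Sum.inr ())
      = G.deg S v := by
  have hunion : G.incEdges S v = (G.splitVertex ea eb wa wb).incEdges S (Sum.inl v) ∪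
      (G.splitVertex ea eb wa wb).incEdges S (Sum.inr ()) := by
    ext e
    simp only [incEdges, Set.mem_union, Set.mem_ofPred_eq, ← and_or_left,
      mem_ends_iff_inl_or_inr_mem_splitVertex_ends hwa hwb]
  have hdisj : Disjoint ((G.splitVertex ea eb wa wb).incEdges S (Sum.inl v))
      ((G.splitVertex ea eb wa wb).incEdges S (Sum.inr ())) :=
    Set.disjoint_left.mpr fun e hx hy =>
      not_inl_and_inr_mem_splitVertex_ends hwa hwb ⟨hx.2, hy.2⟩
  rw [deg, deg, deg, hunion, Set.ncard_union_eq hdisj]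

theorem Reachable.of_splitVertex (hwa : G.ends ea = s(v, wa)) (hwb : G.ends eb = s(v, wb))
    {z z' : V ⊕ Unit} (h : (G.splitVertex ea eb wa wb).Reachable S z z') :
    G.Reachable S (unsplit v z) (unsplit v z') :=
  Relation.ReflTransGen.lift (unsplit v) (fun _ _ ⟨e, he, hends⟩ =>
    ⟨e, he, by rw [← map_unsplit_splitVertex_ends hwa hwb e, hends, Sym2.map_mk]⟩) _ _ h

theorem Reachable.splitVertex (hwa : G.ends ea = s(v, wa)) (hwb : G.ends eb = s(v, wb))
    (h : G.Reachable S v b) :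
    (G.splitVertex ea eb wa wb).Reachable S (Sum.inl v) (Sum.inl b) ∨
      (G.splitVertex ea eb wa wb).Reachable S (Sum.inr ()) (Sum.inl b) := by
  induction h with
  | refl => exact Or.inl .refl
  | @tail c d _ hcd ih =>
    obtain ⟨e, he, hends⟩ := hcd
    by_cases hy : Sum.inr () ∈ (G.splitVertex ea eb wa wb).ends e
    · -- `e` is `ea` or `eb`, and now joins `y` to its end other than `v`
      obtain ⟨w | ⟨⟩, hz⟩ := Sym2.mem_iff_exists.mp hy
      · have hvw : G.ends e = s(v, w) := by
          rw [← map_unsplit_splitVertex_ends hwa hwb e, hz, Sym2.map_mk, unsplit_inl, unsplit_inr]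
        rcases Sym2.eq_iff.mp (hends.symm.trans hvw) with ⟨-, rfl⟩ | ⟨-, rfl⟩
        · exact Or.inr (.single ⟨e, he, hz⟩)
        · exact Or.inl .refl
      · exact absurd (hz ▸ Sym2.mk_isDiag_iff.mpr rfl) ((G.splitVertex ea eb wa wb).loopless e)
    · have hne := not_or.mp (inr_mem_splitVertex_ends_iff.not.mp hy)
      have hadj : (G.splitVertex ea eb wa wb).Adj S (Sum.inl c) (Sum.inl d) :=
        ⟨e, he, by rw [splitVertex_ends_of_ne hne.1 hne.2, hends, Sym2.map_mk]⟩
      exact ih.imp (·.tail hadj) (·.tail hadj)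

theorem Connected.splitVertex (hwa : G.ends ea = s(v, wa)) (hwb : G.ends eb = s(v, wb))
    (hc : G.Connected S) (hxy : (G.splitVertex ea eb wa wb).Reachable S (Sum.inl v) (Sum.inr ())) :
    (G.splitVertex ea eb wa wb).Connected S := by
  have hx : ∀ z, (G.splitVertex ea eb wa wb).Reachable S (Sum.inl v) z := by
    rintro (b | ⟨⟩)
    · rcases (hc v b).splitVertex hwa hwb with h | h
      exacts [h, hxy.trans h]
    · exact hxy
  exact fun z z' => (hx z).symm.trans (hx z')

theorem IsHamCycle.isSpanningTree_splitVertex [Finite V] [Finite E]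
    (hwa : G.ends ea = s(v, wa)) (hwb : G.ends eb = s(v, wb)) (hC : G.IsHamCycle S)
    (hy : (G.splitVertex ea eb wa wb).deg S (Sum.inr ()) = 1) :
    (G.splitVertex ea eb wa wb).IsSpanningTree S := by
  have hx : (G.splitVertex ea eb wa wb).deg S (Sum.inl v) = 1 := by
    have := deg_splitVertex_inl_add_inr hwa hwb S
    rw [hC.2 v] at this
    omega
  -- `x` and `y` are the only vertices of odd degree
  have hxy : (G.splitVertex ea eb wa wb).Reachable S (Sum.inl v) (Sum.inr ()) := by
    refine reachable_of_odd_deg (hx ▸ odd_one) ?_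
    rintro (w | ⟨⟩) hwx hwy
    · rw [deg_splitVertex_inl hwa hwb (fun h => hwx (h ▸ rfl)), hC.2 w]
      exact even_two
    · exact absurd rfl hwy
  refine isSpanningTree_of_connected_of_ncard_add_one (hC.1.splitVertex hwa hwb hxy) ?_
  rw [hC.ncard, Nat.card_sum, Nat.card_of_subsingleton ()]

theorem IsHamCycle.hasPerfectlyBalancedDTD_splitVertex [Finite V] [Finite E] (hab : ea ≠ eb)
    (hwa : G.ends ea = s(v, wa)) (hwb : G.ends eb = s(v, wb)) {C₁ C₂ : Set E}
    (hC₁ : G.IsHamCycle C₁) (hC₂ : G.IsHamCycle C₂) (hcover : C₁ ∪ C₂ = Set.univ)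
    (hdisj : Disjoint C₁ C₂) (hC₁ab : (C₁ ∩ {ea, eb}).ncard = 1) :
    (G.splitVertex ea eb wa wb).HasPerfectlyBalancedDTD := by
  have hy₁ : (G.splitVertex ea eb wa wb).deg C₁ (Sum.inr ()) = 1 :=
    (deg_splitVertex_inr C₁).trans hC₁ab
  have hy₂ : (G.splitVertex ea eb wa wb).deg C₂ (Sum.inr ()) = 1 := by
    have := deg_add_deg_of_union_eq_univ (G := G.splitVertex ea eb wa wb) (a := Sum.inr ())
      hcover hdisj
    rw [deg_splitVertex_inr Set.univ, Set.univ_inter, Set.ncard_pair hab, hy₁] at this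
    omega
  refine ⟨C₁, C₂, ⟨hcover, hdisj, hC₁.isSpanningTree_splitVertex hwa hwb hy₁,
    hC₂.isSpanningTree_splitVertex hwa hwb hy₂⟩, ?_⟩
  rintro (w | ⟨⟩)
  · rcases eq_or_ne w v with rfl | hw
    · have h₁ := deg_splitVertex_inl_add_inr hwa hwb C₁
      have h₂ := deg_splitVertex_inl_add_inr hwa hwb C₂
      rw [hC₁.2, hy₁] at h₁
      rw [hC₂.2, hy₂] at h₂
      omega
    · rw [deg_splitVertex_inl hwa hwb hw, deg_splitVertex_inl hwa hwb hw, hC₁.2, hC₂.2]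
  · rw [hy₁, hy₂]

theorem IsDTD.isHamCycle_of_splitVertex [Finite E] (hreg : ∀ w, G.deg Set.univ w = 4)
    (hwa : G.ends ea = s(v, wa)) (hwb : G.ends eb = s(v, wb)) {T₁ T₂ : Set E}
    (hT : (G.splitVertex ea eb wa wb).IsDTD T₁ T₂)
    (hbal : ∀ z, (G.splitVertex ea eb wa wb).deg T₁ z = (G.splitVertex ea eb wa wb).deg T₂ z) :
    G.IsHamCycle T₁ := by
  obtain ⟨hcover, hdisj, ⟨hconn, -⟩, -⟩ := hT
  have hhalf : ∀ z, (G.splitVertex ea eb wa wb).deg Set.univ z =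
      2 * (G.splitVertex ea eb wa wb).deg T₁ z := fun z => by
    rw [← deg_add_deg_of_union_eq_univ hcover hdisj, ← hbal z, two_mul]
  refine ⟨fun a b => (hconn (Sum.inl a) (Sum.inl b)).of_splitVertex hwa hwb, fun w => ?_⟩
  have : G.deg Set.univ w = 2 * G.deg T₁ w := by
    rcases eq_or_ne w v with rfl | hw
    · rw [← deg_splitVertex_inl_add_inr hwa hwb, ← deg_splitVertex_inl_add_inr hwa hwb,
        hhalf, hhalf, mul_add]
    · rw [← deg_splitVertex_inl hwa hwb hw, ← deg_splitVertex_inl hwa hwb hw, hhalf]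
  rw [hreg] at this
  omega

theorem HasPerfectlyBalancedDTD.exists_isHamCycle_pair [Finite E]
    (hreg : ∀ w, G.deg Set.univ w = 4) (hwa : G.ends ea = s(v, wa)) (hwb : G.ends eb = s(v, wb))
    (h : (G.splitVertex ea eb wa wb).HasPerfectlyBalancedDTD) :
    ∃ C₁ C₂ : Set E, Disjoint C₁ C₂ ∧ G.IsHamCycle C₁ ∧ G.IsHamCycle C₂ := by
  obtain ⟨T₁, T₂, hT, hbal⟩ := h
  exact ⟨T₁, T₂, hT.2.1, hT.isHamCycle_of_splitVertex hreg hwa hwb hbal,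
    hT.symm.isHamCycle_of_splitVertex hreg hwa hwb fun z => (hbal z).symm⟩

end Split

end Multigraph

theorem two_ham_cycles_iff_perfectly_balanced_general {V E : Type*}
    [Finite V] [Finite E] [DecidableEq E]
    (G : Multigraph V E) (hreg : ∀ w : V, G.deg Set.univ w = 4)
    (v v1 v2 v3 v4 : V)
    (e1 e2 e3 e4 : E)
    (he12 : e1 ≠ e2) (he13 : e1 ≠ e3) (he14 : e1 ≠ e4)
    (he23 : e2 ≠ e3) (he24 : e2 ≠ e4) (he34 : e3 ≠ e4)
    (hend1 : G.ends e1 = s(v, v1)) (hend2 : G.ends e2 = s(v, v2))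
    (hend3 : G.ends e3 = s(v, v3)) (hend4 : G.ends e4 = s(v, v4)) :
    (∃ C1 C2 : Set E, Disjoint C1 C2 ∧ G.IsHamCycle C1 ∧ G.IsHamCycle C2) ↔
      ((G.splitVertex e3 e4 v3 v4).HasPerfectlyBalancedDTD ∨
       (G.splitVertex e2 e4 v2 v4).HasPerfectlyBalancedDTD ∨
       (G.splitVertex e2 e3 v2 v3).HasPerfectlyBalancedDTD) := by
  have hv : G.incEdges Set.univ v = {e1, e2, e3, e4} := by
    refine (Set.eq_of_subset_of_ncard_le ?_ ?_ (Set.toFinite _)).symm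
    · rintro e (rfl | rfl | rfl | rfl) <;> simp [Multigraph.incEdges, *]
    · rw [← Multigraph.deg, hreg]
      simp [Set.ncard_insert_of_notMem, *]
  constructor
  · rintro ⟨C₁, C₂, hdisj, hC₁, hC₂⟩
    have hcover := hC₁.union_eq_univ hreg hC₂ hdisj
    have hC₁v : (C₁ ∩ {e1, e2, e3, e4}).ncard = 2 := by
      rw [← hv, ← Multigraph.incEdges_eq_inter]
      exact hC₁.2 v
    rcases Set.ncard_inter_pair_eq_one_of_ncard_inter_eq_two he12 he13 he14 he23 he24 he34 hC₁v
      with h | h | h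
    · exact .inl <| hC₁.hasPerfectlyBalancedDTD_splitVertex he34 hend3 hend4 hC₂ hcover hdisj h
    · exact .inr <| .inl <|
        hC₁.hasPerfectlyBalancedDTD_splitVertex he24 hend2 hend4 hC₂ hcover hdisj h
    · exact .inr <| .inr <|
        hC₁.hasPerfectlyBalancedDTD_splitVertex he23 hend2 hend3 hC₂ hcover hdisj h
  · rintro (h | h | h)
    exacts [h.exists_isHamCycle_pair hreg hend3 hend4, h.exists_isHamCycle_pair hreg hend2 hend4,
      h.exists_isHamCycle_pair hreg hend2 hend3]

/-- **Theorem (Statement 19).** Let `G` be a finite 4-regular graph, `v` a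
vertex with distinct neighbours `v1, v2, v3, v4` joined to `v` by the edges
`e1, e2, e3, e4`, and for `i = 1, 2, 3` let `Gi` be obtained from `G` by
deleting `v` and adding new vertices `x, y` with `x` joined to `v1, v_{i+1}`
and `y` joined to the other two neighbours.  Then `G` contains two
edge-disjoint Hamiltonian cycles iff some `Gi` has a perfectly balanced
double tree decomposition. -/
theorem two_ham_cycles_iff_perfectly_balanced {V E : Type*}
    [Finite V] [Finite E] [DecidableEq E]
    (G : Multigraph V E) (hreg : ∀ w : V, G.deg Set.univ w = 4)
    (v v1 v2 v3 v4 : V)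
    (h12 : v1 ≠ v2) (h13 : v1 ≠ v3) (h14 : v1 ≠ v4)
    (h23 : v2 ≠ v3) (h24 : v2 ≠ v4) (h34 : v3 ≠ v4)
    (e1 e2 e3 e4 : E)
    (he12 : e1 ≠ e2) (he13 : e1 ≠ e3) (he14 : e1 ≠ e4)
    (he23 : e2 ≠ e3) (he24 : e2 ≠ e4) (he34 : e3 ≠ e4)
    (hend1 : G.ends e1 = s(v, v1)) (hend2 : G.ends e2 = s(v, v2))
    (hend3 : G.ends e3 = s(v, v3)) (hend4 : G.ends e4 = s(v, v4)) :
    (∃ C1 C2 : Set E, Disjoint C1 C2 ∧ G.IsHamCycle C1 ∧ G.IsHamCycle C2) ↔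
      ((G.splitVertex e3 e4 v3 v4).HasPerfectlyBalancedDTD ∨
       (G.splitVertex e2 e4 v2 v4).HasPerfectlyBalancedDTD ∨
       (G.splitVertex e2 e3 v2 v3).HasPerfectlyBalancedDTD) :=
  two_ham_cycles_iff_perfectly_balanced_general G hreg v v1 v2 v3 v4 e1 e2 e3 e4 he12 he13 he14 he23
    he24 he34 hend1 hend2 hend3 hend4
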